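/- In the CFI gadget CFI(P_i,P_j,P_k) (as a colored graph), if the two vertices of P_i are given distinct colors and the two vertices of P_j are given distinct colors, then two rounds of color refinement assign distinct colors to all four vertices of F and to the two vertices of P_k. Conversely, if at most one of P_i, P_j is distinguished, color refinement leaves P_k undistinguished. -/
import Mathlib


open Finset
open scoped Classical

/-- Vertices of the CFI gadget. -/
abbrev CFIVertex : Type := (Fin 3 × Fin 2) ⊕ (Fin 2 × Fin 2)

/-- The CFI gadget graph. -/
def CFIGraph : SimpleGraph CFIVertex :=
  SimpleGraph.fromRel (fun u v =>
    match u, v with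
    | Sum.inr (a, b), Sum.inl (t, x) =>
        (t = 0 ∧ x = a) ∨ (t = 1 ∧ x = b) ∨
        (t = 2 ∧ ((x = 0 ∧ a = b) ∨ (x = 1 ∧ a ≠ b)))
    | _, _ => False)

/-- The coloring: each pair `P_t` is a color class, and `F` is a color class. -/
def CFIColor : CFIVertex → Fin 4
  | Sum.inl (t, _) => t.castSucc
  | Sum.inr _ => 3

/-- One round of color refinement: the new color of a vertex is its old color
together with the multiset of colors of its neighbors. -/
noncomputable def refineStep {β : Type*} (α : CFIVertex → β) :
    CFIVertex → β × Multiset β :=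
  fun v => (α v, (univ.filter fun w => CFIGraph.Adj v w).val.map α)

/-- A coloring is equitable if vertices of equal color have, for each color,
equally many neighbors of that color. -/
def IsEquitable (α : CFIVertex → ℕ) : Prop :=
  ∀ u v : CFIVertex, α u = α v → ∀ k : ℕ,
    (univ.filter fun w => CFIGraph.Adj u w ∧ α w = k).card =
    (univ.filter fun w => CFIGraph.Adj v w ∧ α w = k).card


/-! ### Auxiliary machinery -/

/-- The relation used to define `CFIGraph`, as a standalone definition. -/
def cfiRel : CFIVertex → CFIVertex → Prop := fun u v =>
    match u, v with
    | Sum.inr (a, b), Sum.inl (t, x) =>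
        (t = 0 ∧ x = a) ∨ (t = 1 ∧ x = b) ∨
        (t = 2 ∧ ((x = 0 ∧ a = b) ∨ (x = 1 ∧ a ≠ b)))
    | _, _ => False

instance : DecidableRel cfiRel := fun u v =>
  match u, v with
  | Sum.inr (a, b), Sum.inl (t, x) => by dsimp [cfiRel]; infer_instance
  | Sum.inl _, _ => by dsimp [cfiRel]; infer_instance
  | Sum.inr _, Sum.inr _ => by dsimp [cfiRel]; infer_instance

instance : DecidableRel CFIGraph.Adj := fun u v =>
  decidable_of_iff (u ≠ v ∧ (cfiRel u v ∨ cfiRel v u)) Iff.rfl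

/-- Explicit neighbour sets in the CFI gadget. -/
def nbrs : CFIVertex → Finset CFIVertex
  | Sum.inl (t, x) =>
      if t = 0 then {Sum.inr (x, 0), Sum.inr (x, 1)}
      else if t = 1 then {Sum.inr (0, x), Sum.inr (1, x)}
      else if x = 0 then {Sum.inr (0, 0), Sum.inr (1, 1)}
      else {Sum.inr (0, 1), Sum.inr (1, 0)}
  | Sum.inr (a, b) => {Sum.inl (0, a), Sum.inl (1, b), Sum.inl (2, if a = b then 0 else 1)}

lemma adj_iff : ∀ u w : CFIVertex, CFIGraph.Adj u w ↔ w ∈ nbrs u := by decide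

lemma filter_adj (u : CFIVertex) {h : DecidablePred fun w => CFIGraph.Adj u w} :
    @Finset.filter _ _ h univ = nbrs u := by
  ext w; simp [adj_iff]

lemma rs_eq {β : Type*} (α : CFIVertex → β) (v : CFIVertex) :
    refineStep α v = (α v, (nbrs v).val.map α) := by
  unfold refineStep; rw [filter_adj]

lemma count_lemma (β : CFIVertex → ℕ) (u : CFIVertex) (k : ℕ)
    {h : DecidablePred fun w => CFIGraph.Adj u w ∧ β w = k} :
    (@Finset.filter _ _ h univ).card = Multiset.count k ((nbrs u).val.map β) := by
  classical
  rw [Multiset.count_map]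
  rw [show (@Finset.filter _ _ h univ)
      = (nbrs u).filter (fun w => k = β w) by
    ext w; simp [adj_iff, eq_comm]]
  rfl

lemma mne {γ : Type*} {s t : Multiset γ} {x : γ} (hx : x ∈ s) (hx' : x ∉ t) : s ≠ t :=
  fun h => hx' (h ▸ hx)

lemma nval (a b : Fin 2) : (nbrs (Sum.inr (a, b))).val =
    {Sum.inl (0, a), Sum.inl (1, b), Sum.inl (2, if a = b then 0 else 1)} := by
  fin_cases a <;> fin_cases b <;> decide

lemma nvalk0 : (nbrs (Sum.inl (2, 0))).val = {Sum.inr (0, 0), Sum.inr (1, 1)} := by decide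
lemma nvalk1 : (nbrs (Sum.inl (2, 1))).val = {Sum.inr (0, 1), Sum.inr (1, 0)} := by decide

/-- Refinement witnessing coloring when `P_i` is undistinguished. -/
def betaI : CFIVertex → ℕ
  | Sum.inl (t, x) => if t = 0 then 0 else if t = 1 then 1 + x.val else 3
  | Sum.inr (_, b) => 4 + b.val

/-- Refinement witnessing coloring when `P_j` is undistinguished. -/
def betaJ : CFIVertex → ℕ
  | Sum.inl (t, x) => if t = 0 then x.val else if t = 1 then 2 else 3
  | Sum.inr (a, _) => 4 + a.val

lemma betaI_map : ∀ u v : CFIVertex, betaI u = betaI v →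
    (nbrs u).val.map betaI = (nbrs v).val.map betaI := by decide

lemma betaJ_map : ∀ u v : CFIVertex, betaJ u = betaJ v →
    (nbrs u).val.map betaJ = (nbrs v).val.map betaJ := by decide

/-- If both pairs `P_i` and `P_j` are distinguished, two rounds of color
refinement distinguish all four vertices of `F` and the pair `P_k`; conversely, if
at most one of `P_i`, `P_j` is distinguished, color refinement leaves `P_k`
undistinguished (there is an equitable refinement not splitting `P_k`). -/
theorem cfi_refinement
    (α₀ : CFIVertex → ℕ)
    (hcol : ∀ u v : CFIVertex, α₀ u = α₀ v → CFIColor u = CFIColor v)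
    (hF : ∀ p q : Fin 2 × Fin 2, α₀ (Sum.inr p) = α₀ (Sum.inr q))
    (hPk : α₀ (Sum.inl (2, 0)) = α₀ (Sum.inl (2, 1))) :
    ((α₀ (Sum.inl (0, 0)) ≠ α₀ (Sum.inl (0, 1)) ∧
      α₀ (Sum.inl (1, 0)) ≠ α₀ (Sum.inl (1, 1))) →
      ((∀ p q : Fin 2 × Fin 2, p ≠ q →
          refineStep (refineStep α₀) (Sum.inr p) ≠
          refineStep (refineStep α₀) (Sum.inr q)) ∧
        refineStep (refineStep α₀) (Sum.inl (2, 0)) ≠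
        refineStep (refineStep α₀) (Sum.inl (2, 1)))) ∧
    ((α₀ (Sum.inl (0, 0)) = α₀ (Sum.inl (0, 1)) ∨
      α₀ (Sum.inl (1, 0)) = α₀ (Sum.inl (1, 1))) →
      ∃ β : CFIVertex → ℕ, IsEquitable β ∧
        (∀ u v : CFIVertex, β u = β v → α₀ u = α₀ v) ∧
        β (Sum.inl (2, 0)) = β (Sum.inl (2, 1))) := by
  have hclass : ∀ (t t' : Fin 3) (x x' : Fin 2), t ≠ t' →
      α₀ (Sum.inl (t, x)) ≠ α₀ (Sum.inl (t', x')) := by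
    intro t t' x x' ht h
    have hc := hcol _ _ h
    simp only [CFIColor] at hc
    exact ht (Fin.castSucc_injective _ hc)
  constructor
  · rintro ⟨hi, hj⟩
    have hi' : ∀ a a' : Fin 2, a ≠ a' →
        α₀ (Sum.inl (0, a)) ≠ α₀ (Sum.inl (0, a')) := by
      intro a a' ha
      fin_cases a <;> fin_cases a' <;> first | exact absurd rfl ha | exact hi | exact hi.symm
    have hj' : ∀ b b' : Fin 2, b ≠ b' →
        α₀ (Sum.inl (1, b)) ≠ α₀ (Sum.inl (1, b')) := by
      intro b b' hb
      fin_cases b <;> fin_cases b' <;> first | exact absurd rfl hb | exact hj | exact hj.symm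
    have hone : ∀ p q : Fin 2 × Fin 2, p ≠ q →
        refineStep α₀ (Sum.inr p) ≠ refineStep α₀ (Sum.inr q) := by
      rintro ⟨a, b⟩ ⟨a', b'⟩ hpq h
      have h2 := congrArg Prod.snd h
      rw [rs_eq, rs_eq] at h2
      simp only [nval, Multiset.insert_eq_cons, Multiset.map_cons, Multiset.map_singleton] at h2
      by_cases ha : a = a'
      · subst ha
        have hb : b ≠ b' := fun hb => hpq (by rw [hb])
        refine mne (x := α₀ (Sum.inl (1, b))) ?_ ?_ h2
        · simp
        · intro hmem
          simp only [Multiset.mem_cons, Multiset.mem_singleton] at hmem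
          rcases hmem with hh | hh | hh
          · exact hclass 1 0 b a (by decide) hh
          · exact hj' b b' hb hh
          · exact hclass 1 2 b _ (by decide) hh
      · refine mne (x := α₀ (Sum.inl (0, a))) ?_ ?_ h2
        · simp
        · intro hmem
          simp only [Multiset.mem_cons, Multiset.mem_singleton] at hmem
          rcases hmem with hh | hh | hh
          · exact hi' a a' ha hh
          · exact hclass 0 1 a b' (by decide) hh
          · exact hclass 0 2 a _ (by decide) hh
    constructor
    · intro p q hpq h
      exact hone p q hpq (congrArg Prod.fst h)
    · intro h
      have h2 := congrArg Prod.snd h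
      rw [rs_eq (refineStep α₀) (Sum.inl (2, 0)),
        rs_eq (refineStep α₀) (Sum.inl (2, 1))] at h2
      rw [nvalk0, nvalk1] at h2
      simp only [Multiset.insert_eq_cons, Multiset.map_cons, Multiset.map_singleton] at h2
      refine mne (x := refineStep α₀ (Sum.inr (0, 0))) ?_ ?_ h2
      · simp
      · intro hmem
        simp only [Multiset.mem_cons, Multiset.mem_singleton] at hmem
        rcases hmem with hh | hh
        · exact hone (0, 0) (0, 1) (by decide) hh
        · exact hone (0, 0) (1, 0) (by decide) hh
  · rintro (h | h)
    · refine ⟨betaI, ?_, ?_, by decide⟩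
      · intro u v huv k
        rw [count_lemma, count_lemma, betaI_map u v huv]
      · intro u v huv
        fin_cases u <;> fin_cases v <;>
          first
            | rfl
            | exact h | exact h.symm | exact hPk | exact hPk.symm
            | exact hF _ _
            | exact absurd huv (by decide)
    · refine ⟨betaJ, ?_, ?_, by decide⟩
      · intro u v huv k
        rw [count_lemma, count_lemma, betaJ_map u v huv]
      · intro u v huv
        fin_cases u <;> fin_cases v <;>
          first
            | rfl
            | exact h | exact h.symm | exact hPk | exact hPk.symm
            | exact hF _ _
            | exact absurd huv (by decide)
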